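/- arXiv:1808.04282 — 7 statements merged into one kernel-verified Lean document; each statement's English description precedes it below -/
import Mathlib

section
/- For every positive integer m, the formal power series (1 - q^{m+1}) / ((1-q^2)(1-q^3)) has nonnegative coefficients. -/
/-!
Every `k ≠ 1` is of the form `2a + 3b`, and shifting representations `n = 2i + 3j` by a fixed
`(a, b)` injects those of `n` into those of `n + k`. With `k = m + 1 ≥ 2` this gives
`r23 (n - (m + 1)) ≤ r23 n`.
-/

/-- The coefficient of `q^n` in `1/((1-q^2)(1-q^3)) = ∑_{i,j≥0} q^{2i+3j}`:
the number of pairs `(i,j)` of nonnegative integers with `2i+3j = n`. -/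
def r23 (n : ℕ) : ℕ :=
  ((Finset.range (n + 1) ×ˢ Finset.range (n + 1)).filter
    (fun p => 2 * p.1 + 3 * p.2 = n)).card

lemma exists_two_mul_add_three_mul_eq {k : ℕ} (hk : k ≠ 1) : ∃ a b, 2 * a + 3 * b = k := by
  obtain ⟨c, rfl | rfl⟩ := Nat.even_or_odd' k
  · exact ⟨c, 0, by omega⟩
  · exact ⟨c - 1, 1, by omega⟩

lemma r23_le_r23_add_two_mul_add_three_mul (n a b : ℕ) :
    r23 n ≤ r23 (n + (2 * a + 3 * b)) := by
  refine Finset.card_le_card_of_injOn (fun p => (p.1 + a, p.2 + b)) ?_ ?_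
  · intro p hp
    simp only [Finset.mem_coe, Finset.mem_filter, Finset.mem_product, Finset.mem_range] at hp ⊢
    omega
  · intro p _ p' _ h
    simp only [Prod.mk.injEq] at h
    ext <;> omega

lemma r23_le_r23_add {k : ℕ} (hk : k ≠ 1) (n : ℕ) : r23 n ≤ r23 (n + k) := by
  obtain ⟨a, b, rfl⟩ := exists_two_mul_add_three_mul_eq hk
  exact r23_le_r23_add_two_mul_add_three_mul n a b

/-- The coefficient of `q^n` in `(1-q^{m+1})/((1-q^2)(1-q^3))`, namely
`r23 n - r23 (n - (m+1))`, is nonnegative for every positive integer `m`. -/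
theorem coeff_nonneg_one_sub_qm (m : ℕ) (hm : 1 ≤ m) (n : ℕ) :
    (if m + 1 ≤ n then r23 (n - (m + 1)) else 0) ≤ r23 n := by
  split_ifs with h
  · have := r23_le_r23_add (k := m + 1) (by omega) (n - (m + 1))
    rwa [Nat.sub_add_cancel h] at this
  · exact Nat.zero_le _
end

section
/- For each integer k ≥ 0, define integers a_{k,m}(n) by the formal Laurent/power series expansion 1/((qz;q)_k (q/z;q)_k) = ∑_{n≥0} ∑_{m∈ℤ} a_{k,m}(n) z^m q^n, where (x;q)_k = ∏_{i=0}^{k-1}(1 - x q^i). Then for all integers m ≥ 0 and n ≥ 0, a_{k,m}(n) ≥ a_{k,m+2}(n). -/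
/-!
The coefficients are symmetric in `m` (exchange `z ↔ 1/z`), and we show by induction on `k` that
within each parity class they decrease away from `m = 0`. Splitting off the last factor
`1/((1 - z q^(k+1))(1 - q^(k+1)/z))` writes `a_{k+1,m}(n)` as a sum, over `s` with `(k+1)s ≤ n`,
of the window sums `a_{k,m+s}(n') + a_{k,m+s-2}(n') + ⋯ + a_{k,m-s}(n')`, `n' = n - (k+1)s`.
Moving a window from `m` to `m + 2` only trades its end term `a_{k,m-s}(n') = a_{k,s-m}(n')`
for `a_{k,m+s+2}(n')`, which is no larger since `|m - s| ≤ m + s + 2` with the same parity.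
-/

/-- `akm k m n` is the coefficient of `z^m q^n` in
`1/((qz;q)_k (q/z;q)_k) = ∏_{i=1}^{k} 1/((1 - z q^i)(1 - q^i/z))`, where
`(x;q)_k = ∏_{i=0}^{k-1} (1 - x q^i)`: it counts pairs `(α, β)` of `k`-tuples of
nonnegative integers with `∑_{i=1}^k i(α_i + β_i) = n` and `∑ α_i - ∑ β_i = m`. -/
def akm (k : ℕ) (m : ℤ) (n : ℕ) : ℕ :=
  (Finset.univ.filter
    (fun p : (Fin k → Fin (n + 1)) × (Fin k → Fin (n + 1)) =>
      (∑ i : Fin k, (i.1 + 1) * (((p.1 i : ℕ)) + (p.2 i : ℕ)) = n) ∧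
      ((∑ i : Fin k, ((p.1 i : ℕ) : ℤ)) - ∑ i : Fin k, ((p.2 i : ℕ) : ℤ)) = m)).card


open Finset

structure IsSymmUnimodal {M : Type*} [Preorder M] (f : ℤ → M) : Prop where
  neg_eq : ∀ x, f (-x) = f x
  add_two_le : ∀ m, 0 ≤ m → f (m + 2) ≤ f m

namespace IsSymmUnimodal

variable {M : Type*} [Preorder M] {f : ℤ → M}

theorem add_two_mul_le (hf : IsSymmUnimodal f) {m : ℤ} (hm : 0 ≤ m) (j : ℕ) :
    f (m + 2 * j) ≤ f m := by
  induction j with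
  | zero => simp
  | succ j ih =>
    calc f (m + 2 * (j + 1 : ℕ)) = f ((m + 2 * j) + 2) := by push_cast; ring_nf
      _ ≤ f (m + 2 * j) := hf.add_two_le _ (by positivity)
      _ ≤ f m := ih

theorem add_two_add_le_sub (hf : IsSymmUnimodal f) {m : ℤ} (hm : 0 ≤ m) (s : ℕ) :
    f (m + 2 + s) ≤ f (m - s) := by
  rcases le_or_gt (s : ℤ) m with hs | hs
  · calc f (m + 2 + s) = f ((m - s) + 2 * (s + 1 : ℕ)) := by push_cast; ring_nf
      _ ≤ f (m - s) := hf.add_two_mul_le (by omega) _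
  · obtain ⟨j, rfl⟩ := Int.eq_ofNat_of_zero_le hm
    calc f (j + 2 + s) = f ((s - j) + 2 * (j + 1 : ℕ)) := by push_cast; ring_nf
      _ ≤ f (s - j) := hf.add_two_mul_le (by omega) _
      _ = f (j - s) := by rw [← hf.neg_eq, neg_sub]

theorem sum_range_add_two_le [AddCommMonoid M] [IsOrderedAddMonoid M] (hf : IsSymmUnimodal f)
    {m : ℤ} (hm : 0 ≤ m) (s : ℕ) :
    ∑ a ∈ range (s + 1), f (m + 2 + s - 2 * a) ≤ ∑ a ∈ range (s + 1), f (m + s - 2 * a) := by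
  have shift : ∀ a : ℕ, m + 2 + s - 2 * (a + 1 : ℕ) = m + s - 2 * a := fun a => by push_cast; ring
  rw [sum_range_succ', sum_range_succ]
  simp only [shift, Nat.cast_zero, mul_zero, sub_zero, show m + s - 2 * s = m - s by ring]
  exact add_le_add_right (hf.add_two_add_le_sub hm s) _

end IsSymmUnimodal

namespace Akm

variable {k : ℕ}

def weight (p : (Fin k → ℕ) × (Fin k → ℕ)) : ℕ := ∑ i : Fin k, (i.1 + 1) * (p.1 i + p.2 i)

def charge (p : (Fin k → ℕ) × (Fin k → ℕ)) : ℤ :=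
  ∑ i : Fin k, (p.1 i : ℤ) - ∑ i : Fin k, (p.2 i : ℤ)

/-- The bound `n` on the entries only serves to make the set finite, see `mem_tuples`. -/
def tuples (k : ℕ) (m : ℤ) (n : ℕ) : Finset ((Fin k → ℕ) × (Fin k → ℕ)) :=
  {p ∈ Fintype.piFinset (fun _ => range (n + 1)) ×ˢ Fintype.piFinset (fun _ => range (n + 1)) |
    weight p = n ∧ charge p = m}

theorem add_le_weight (p : (Fin k → ℕ) × (Fin k → ℕ)) (i : Fin k) :
    p.1 i + p.2 i ≤ weight p :=
  calc p.1 i + p.2 i ≤ (i.1 + 1) * (p.1 i + p.2 i) := Nat.le_mul_of_pos_left _ i.1.succ_pos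
    _ ≤ weight p := single_le_sum (f := fun j : Fin k => (j.1 + 1) * (p.1 j + p.2 j))
        (fun _ _ => Nat.zero_le _) (mem_univ i)

theorem mem_tuples {m : ℤ} {n : ℕ} {p : (Fin k → ℕ) × (Fin k → ℕ)} :
    p ∈ tuples k m n ↔ weight p = n ∧ charge p = m := by
  refine ⟨fun hp => (mem_filter.1 hp).2, fun hp => mem_filter.2 ⟨?_, hp⟩⟩
  have := add_le_weight p
  simp only [mem_product, Fintype.mem_piFinset, mem_range]
  exact ⟨fun i => by grind, fun i => by grind⟩

theorem weight_succ (p : (Fin (k + 1) → ℕ) × (Fin (k + 1) → ℕ)) :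
    weight p =
      weight (Fin.init p.1, Fin.init p.2) + (k + 1) * (p.1 (Fin.last k) + p.2 (Fin.last k)) := by
  simp [weight, Fin.sum_univ_castSucc, Fin.init]

theorem charge_succ (p : (Fin (k + 1) → ℕ) × (Fin (k + 1) → ℕ)) :
    charge p = charge (Fin.init p.1, Fin.init p.2) + p.1 (Fin.last k) - p.2 (Fin.last k) := by
  simp only [charge, Fin.sum_univ_castSucc, Fin.init]
  ring

theorem card_tuples_succ (k : ℕ) (μ : ℤ) (n : ℕ) :
    #(tuples (k + 1) μ n) = ∑ s ∈ range (n + 1) with (k + 1) * s ≤ n, ∑ a ∈ range (s + 1),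
      #(tuples k (μ + s - 2 * a) (n - (k + 1) * s)) := by
  let last (p : (Fin (k + 1) → ℕ) × (Fin (k + 1) → ℕ)) : Σ _ : ℕ, ℕ :=
    ⟨p.1 (Fin.last k) + p.2 (Fin.last k), p.1 (Fin.last k)⟩
  have maps_to : ∀ p ∈ tuples (k + 1) μ n,
      last p ∈ ({s ∈ range (n + 1) | (k + 1) * s ≤ n} : Finset ℕ).sigma fun s => range (s + 1) := by
    intro p hp
    have := weight_succ p
    simp only [mem_tuples] at hp
    simp only [last, mem_sigma, mem_filter, mem_range]
    grind
  rw [card_eq_sum_card_fiberwise maps_to, sum_sigma]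
  refine sum_congr rfl fun s hs => sum_congr rfl fun a ha => ?_
  simp only [mem_filter, mem_range] at hs ha
  refine card_nbij' (fun p => (Fin.init p.1, Fin.init p.2))
    (fun q => (Fin.snoc q.1 a, Fin.snoc q.2 (s - a))) ?_ ?_ ?_ ?_
  · intro p hp
    simp only [mem_coe, mem_filter, mem_tuples, last, Sigma.mk.injEq, heq_eq_eq] at hp ⊢
    obtain ⟨⟨hw, hc⟩, hs, rfl⟩ := hp
    rw [weight_succ, hs] at hw
    rw [charge_succ] at hc
    omega
  · intro q hq
    simp only [mem_coe, mem_filter, mem_tuples, last, Sigma.mk.injEq, heq_eq_eq] at hq ⊢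
    rw [weight_succ, charge_succ]
    simp only [Fin.init_snoc, Fin.snoc_last, Prod.mk.eta, Nat.add_sub_of_le (Nat.lt_succ_iff.1 ha),
      and_true]
    omega
  · intro p hp
    simp only [mem_coe, mem_filter, last, Sigma.mk.injEq, heq_eq_eq] at hp
    obtain ⟨-, rfl, rfl⟩ := hp
    dsimp only
    rw [Nat.add_sub_cancel_left, Fin.snoc_init_self, Fin.snoc_init_self]
  · intro q _
    simp only [Fin.init_snoc]

end Akm

open Akm

theorem akm_eq_card_tuples (k : ℕ) (m : ℤ) (n : ℕ) : akm k m n = #(tuples k m n) := by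
  refine card_bij (fun p _ => (fun i => (p.1 i : ℕ), fun i => (p.2 i : ℕ))) ?_ ?_ ?_
  · exact fun p hp => mem_tuples.2 (mem_filter.1 hp).2
  · intro p _ q _ hpq
    simp only [Prod.mk.injEq, funext_iff, ← Fin.ext_iff] at hpq
    exact Prod.ext (funext hpq.1) (funext hpq.2)
  · intro q hq
    have hle := add_le_weight q
    rw [mem_tuples] at hq
    exact ⟨(fun i => ⟨q.1 i, by grind⟩, fun i => ⟨q.2 i, by grind⟩),
      mem_filter.2 ⟨mem_univ _, hq⟩, rfl⟩

theorem akm_neg (k : ℕ) (m : ℤ) (n : ℕ) : akm k (-m) n = akm k m n := by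
  simp only [akm_eq_card_tuples]
  refine card_nbij' Prod.swap Prod.swap ?_ ?_ (fun _ _ => rfl) (fun _ _ => rfl) <;>
  · intro p hp
    simp only [mem_coe, mem_tuples, weight, charge,
      Prod.fst_swap, Prod.snd_swap, add_comm (p.2 _)] at hp ⊢
    omega

theorem akm_zero_of_ne_zero {m : ℤ} (hm : m ≠ 0) (n : ℕ) : akm 0 m n = 0 := by
  rw [akm_eq_card_tuples, card_eq_zero, eq_empty_iff_forall_notMem]
  intro p hp
  exact hm (mem_tuples.1 hp).2.symm

theorem akm_succ (k : ℕ) (μ : ℤ) (n : ℕ) :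
    akm (k + 1) μ n = ∑ s ∈ range (n + 1) with (k + 1) * s ≤ n, ∑ a ∈ range (s + 1),
      akm k (μ + s - 2 * a) (n - (k + 1) * s) := by
  simp only [akm_eq_card_tuples, card_tuples_succ]

theorem isSymmUnimodal_akm (k n : ℕ) : IsSymmUnimodal (akm k · n) := by
  induction k generalizing n with
  | zero =>
    refine ⟨fun m => akm_neg 0 m n, fun m hm => ?_⟩
    simp [akm_zero_of_ne_zero (show m + 2 ≠ 0 by omega)]
  | succ k ih =>
    refine ⟨fun m => akm_neg (k + 1) m n, fun m hm => ?_⟩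
    rw [akm_succ, akm_succ]
    exact sum_le_sum fun s _ => (ih _).sum_range_add_two_le hm s

theorem akm_antitone (k : ℕ) (m : ℤ) (hm : 0 ≤ m) (n : ℕ) :
    akm k (m + 2) n ≤ akm k m n :=
  (isSymmUnimodal_akm k n).add_two_le m hm
end

section
/- With a_{k,m}(n) the coefficient of z^m q^n in 1/((qz;q)_k (q/z;q)_k), the following recurrence holds: a_{k+1,m}(n) = ∑_{r=0}^{⌊n/(k+1)⌋} ∑_{i=0}^{r} a_{k, m-r+2i}(n - r(k+1)). -/
/-! Counting ℕ-valued tuples instead of `Fin (n + 1)`-valued ones frees the ambient type from `n`;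
the recurrence is then the bijection splitting off the last coordinates `(a, b)` of a pair of
`(k + 1)`-tuples, which contributes the factor `z^(a-b) q^((k+1)(a+b))` of
`1/((1 - z q^(k+1))(1 - q^(k+1)/z))`. -/

open Finset

namespace AKM

variable {k : ℕ}

def weight (p : (Fin k → ℕ) × (Fin k → ℕ)) : ℕ :=
  ∑ i : Fin k, (i.1 + 1) * (p.1 i + p.2 i)

def charge (p : (Fin k → ℕ) × (Fin k → ℕ)) : ℤ :=
  ∑ i : Fin k, (p.1 i : ℤ) - ∑ i : Fin k, (p.2 i : ℤ)

def pairs (k : ℕ) (m : ℤ) (n : ℕ) : Finset ((Fin k → ℕ) × (Fin k → ℕ)) :=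
  {p ∈ Fintype.piFinset (fun _ => range (n + 1)) ×ˢ Fintype.piFinset (fun _ => range (n + 1)) |
    weight p = n ∧ charge p = m}

lemma add_le_weight (p : (Fin k → ℕ) × (Fin k → ℕ)) (j : Fin k) :
    p.1 j + p.2 j ≤ weight p :=
  calc p.1 j + p.2 j ≤ (j.1 + 1) * (p.1 j + p.2 j) := Nat.le_mul_of_pos_left _ j.1.succ_pos
    _ ≤ weight p := single_le_sum (f := fun i : Fin k => (i.1 + 1) * (p.1 i + p.2 i))
        (fun _ _ => Nat.zero_le _) (mem_univ j)

lemma mem_pairs {m : ℤ} {n : ℕ} {p : (Fin k → ℕ) × (Fin k → ℕ)} :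
    p ∈ pairs k m n ↔ weight p = n ∧ charge p = m := by
  simp only [pairs, mem_filter, mem_product, Fintype.mem_piFinset, mem_range, and_iff_right_iff_imp]
  rintro ⟨rfl, -⟩
  exact ⟨fun j => by have := add_le_weight p j; omega, fun j => by have := add_le_weight p j; omega⟩

lemma weight_eq_weight_init_add (p : (Fin (k + 1) → ℕ) × (Fin (k + 1) → ℕ)) :
    weight p = weight (Fin.init p.1, Fin.init p.2) +
      (k + 1) * (p.1 (Fin.last k) + p.2 (Fin.last k)) := by
  simp [weight, Fin.sum_univ_castSucc, Fin.init]

lemma charge_eq_charge_init_add (p : (Fin (k + 1) → ℕ) × (Fin (k + 1) → ℕ)) :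
    charge p = charge (Fin.init p.1, Fin.init p.2) + p.1 (Fin.last k) - p.2 (Fin.last k) := by
  simp only [charge, Fin.sum_univ_castSucc, Fin.init]
  ring

lemma akm_eq_card_pairs (k : ℕ) (m : ℤ) (n : ℕ) : akm k m n = #(pairs k m n) := by
  refine card_bij (fun p _ => (fun j => (p.1 j : ℕ), fun j => (p.2 j : ℕ))) ?_ ?_ ?_
  · intro p hp
    simpa only [mem_pairs, weight, charge, mem_filter, mem_univ, true_and] using hp
  · intro p _ q _ h
    simp only [Prod.mk.injEq, funext_iff, ← Fin.ext_iff] at h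
    exact Prod.ext (funext h.1) (funext h.2)
  · intro q hq
    have hq' := mem_pairs.1 hq
    have hlt : ∀ j, q.1 j < n + 1 ∧ q.2 j < n + 1 := fun j => by
      have := add_le_weight q j; omega
    refine ⟨(fun j => ⟨q.1 j, (hlt j).1⟩, fun j => ⟨q.2 j, (hlt j).2⟩), ?_, rfl⟩
    simpa only [mem_filter, mem_univ, true_and, weight, charge] using hq'

lemma card_pairs_succ (k : ℕ) (m : ℤ) (n : ℕ) :
    #(pairs (k + 1) m n) = #((range (n / (k + 1) + 1)).sigma fun r =>
      (range (r + 1)).sigma fun i => pairs k (m - r + 2 * i) (n - r * (k + 1))) := by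
  refine card_bij'
    (fun p _ => ⟨p.1 (Fin.last k) + p.2 (Fin.last k), p.2 (Fin.last k), (Fin.init p.1, Fin.init p.2)⟩)
    (fun q _ => (Fin.snoc q.2.2.1 (q.1 - q.2.1), Fin.snoc q.2.2.2 q.2.1)) ?_ ?_ ?_ ?_
  · intro p hp
    obtain ⟨hw, hc⟩ := mem_pairs.1 hp
    rw [weight_eq_weight_init_add, mul_comm] at hw
    rw [charge_eq_charge_init_add] at hc
    simp only [mem_sigma, mem_range, mem_pairs, Nat.lt_succ_iff, Nat.le_div_iff_mul_le k.add_one_pos]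
    exact ⟨hw ▸ Nat.le_add_left _ _, Nat.le_add_left _ _, by omega, by push_cast; linarith⟩
  · rintro ⟨r, i, q⟩ hq
    simp only [mem_sigma, mem_range, mem_pairs, Nat.lt_succ_iff, Nat.le_div_iff_mul_le k.add_one_pos] at hq
    obtain ⟨hr, hi, hw, hc⟩ := hq
    rw [mem_pairs, weight_eq_weight_init_add, charge_eq_charge_init_add]
    simp only [Fin.init_snoc, Fin.snoc_last, Nat.sub_add_cancel hi, Nat.cast_sub hi, hw, hc]
    constructor
    · rw [mul_comm (k + 1) r, Nat.sub_add_cancel hr]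
    · ring
  · intro p _
    simp [Fin.snoc_init_self]
  · rintro ⟨r, i, q⟩ hq
    simp only [mem_sigma, mem_range, Nat.lt_succ_iff] at hq
    simp [Nat.sub_add_cancel hq.2.1]

end AKM

open AKM in
theorem akm_rec (k : ℕ) (m : ℤ) (n : ℕ) :
    akm (k + 1) m n =
      ∑ r ∈ Finset.range (n / (k + 1) + 1), ∑ i ∈ Finset.range (r + 1),
        akm k (m - r + 2 * i) (n - r * (k + 1)) := by
  simp only [akm_eq_card_pairs, card_pairs_succ, card_sigma]
end

section
/- Define f_{m,k}(q) by (1-q)/((zq;q)_k (q/z;q)_k) = ∑_{m∈ℤ} z^m f_{m,k}(q). Then f_{0,2}(q) = −q + 1/(1-q^3) + q^2/(1-q^4) + q^8/((1-q^3)(1-q^4)). -/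
/-- `fmk k m n` is the coefficient of `q^n` in `f_{m,k}(q)`, which is defined by
`(1-q)/((zq;q)_k (q/z;q)_k) = ∑_{m ∈ ℤ} z^m f_{m,k}(q)`; thus
`fmk k m n = a_{k,m}(n) - a_{k,m}(n-1)`. -/
def fmk (k : ℕ) (m : ℤ) (n : ℕ) : ℤ :=
  (akm k m n : ℤ) - (if n = 0 then 0 else (akm k m (n - 1) : ℤ))

/-- The coefficient of `q^n` in `q^s/((1-q^a)(1-q^b)) = ∑_{i,j≥0} q^{s+ai+bj}`. -/
def geomCoeff (s a b n : ℕ) : ℤ :=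
  if s ≤ n then
    (((Finset.range (n + 1) ×ˢ Finset.range (n + 1)).filter
      (fun p => a * p.1 + b * p.2 = n - s)).card : ℤ)
  else 0

/-!
Write `a(n)` for the number of `(a, b, c, d) ∈ ℕ⁴` with `a + 2b + c + 2d = n` and `a + b = c + d`,
so that `f_{0,2}(q) = (1 - q) ∑ a(n) qⁿ`. Split these quadruples by the sign of `a - c`. When
`a < c`, lowering `b` and `c` by one is a bijection onto the quadruples of weight `n - 3` with
`a ≤ c`, and the case `c < a` is symmetric. On the diagonal, `a = c` forces `b = d`, which leaves
the `r(n)` solutions of `2i + 4j = n`. Hence `a(n + 3) = a(n) + r(n) + r(n + 3)`. The claimed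
coefficients `c(n)` satisfy `c(n + 1) + c(n + 2) + c(n + 3) = r(n) + r(n + 3)`: beyond small `n`
both sides grow by exactly `3` when `n` increases by `12`, so a finite check suffices. Thus the
partial sums of `c` obey the recursion of `a`.
-/

open Finset

section Trichotomy

variable {α : Type*} [DecidableEq α] (s : Finset α) (f g : α → ℕ)

lemma card_filter_le_eq_add :
    #(s.filter fun x => f x ≤ g x)
      = #(s.filter fun x => f x < g x) + #(s.filter fun x => f x = g x) := by
  rw [← card_union_of_disjoint (disjoint_filter.2 fun _ _ h => h.ne), ← filter_or]
  exact congrArg card (filter_congr fun _ _ => le_iff_lt_or_eq)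

lemma card_eq_filter_lt_add_filter_gt_add_filter_eq :
    #s = #(s.filter fun x => f x < g x) + #(s.filter fun x => g x < f x)
      + #(s.filter fun x => f x = g x) := by
  have h := card_filter_add_card_filter_not (s := s) fun x => f x < g x
  simp only [not_lt] at h
  rw [card_filter_le_eq_add, filter_congr fun _ _ => eq_comm] at h
  omega

end Trichotomy

def pairCount (a b n : ℕ) : ℕ :=
  #((range (n + 1) ×ˢ range (n + 1)).filter fun p => a * p.1 + b * p.2 = n)

def balancedQuads (n : ℕ) : Finset (ℕ × ℕ × ℕ × ℕ) :=
  (range (n + 1) ×ˢ range (n + 1) ×ˢ range (n + 1) ×ˢ range (n + 1)).filter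
    fun ⟨a, b, c, d⟩ => a + 2 * b + c + 2 * d = n ∧ a + b = c + d

lemma mem_balancedQuads {n a b c d : ℕ} :
    (a, b, c, d) ∈ balancedQuads n ↔ a + 2 * b + c + 2 * d = n ∧ a + b = c + d := by
  simp only [balancedQuads, mem_filter, mem_product, mem_range]
  omega

open Fin.NatCast in
lemma akm_two_zero (n : ℕ) : akm 2 0 n = #(balancedQuads n) := by
  have bound {a b c d : ℕ} (h : (a, b, c, d) ∈ balancedQuads n) :
      a < n + 1 ∧ b < n + 1 ∧ c < n + 1 ∧ d < n + 1 := by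
    rw [mem_balancedQuads] at h
    omega
  apply card_nbij' (fun p => ((p.1 0 : ℕ), (p.1 1 : ℕ), (p.2 0 : ℕ), (p.2 1 : ℕ)))
    (fun q => (![(q.1 : Fin (n + 1)), q.2.1], ![(q.2.2.1 : Fin (n + 1)), q.2.2.2]))
  · intro p hp
    simp only [mem_coe, mem_filter, mem_univ, true_and, Fin.sum_univ_two] at hp
    simp only [mem_coe, mem_balancedQuads]
    omega
  · rintro ⟨a, b, c, d⟩ hq
    have := bound hq
    rw [mem_coe, mem_balancedQuads] at hq
    simp only [mem_coe, mem_filter, mem_univ, true_and, Fin.sum_univ_two,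
      Matrix.cons_val_zero, Matrix.cons_val_one, Fin.val_cast_of_lt, this]
    omega
  · intro p _
    ext i <;> fin_cases i <;> simp
  · rintro ⟨a, b, c, d⟩ hq
    simp [bound hq]

lemma card_balancedQuads_filter_eq (n : ℕ) :
    #((balancedQuads n).filter fun p => p.1 = p.2.2.1) = pairCount 2 4 n := by
  apply card_nbij' (fun p => (p.1, p.2.1)) (fun p => (p.1, p.2, p.1, p.2))
  · rintro ⟨a, b, c, d⟩ hp
    simp only [mem_coe, mem_filter, mem_balancedQuads] at hp
    simp only [mem_coe, mem_filter, mem_product, mem_range]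
    omega
  · rintro ⟨i, j⟩ hp
    simp only [mem_coe, mem_filter, mem_product, mem_range] at hp
    simp only [mem_coe, mem_filter, mem_balancedQuads, and_true]
    omega
  · rintro ⟨a, b, c, d⟩ hp
    simp only [mem_coe, mem_filter, mem_balancedQuads] at hp
    simp only [Prod.mk.injEq, true_and]
    omega
  · intro p _
    rfl

lemma card_balancedQuads_filter_gt (n : ℕ) :
    #((balancedQuads n).filter fun p => p.2.2.1 < p.1)
      = #((balancedQuads n).filter fun p => p.1 < p.2.2.1) := by
  apply card_nbij' (fun ⟨a, b, c, d⟩ => (c, d, a, b)) (fun ⟨a, b, c, d⟩ => (c, d, a, b))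
  all_goals
    rintro ⟨a, b, c, d⟩ hp
    simp only [mem_coe, mem_filter, mem_balancedQuads] at hp ⊢ <;> omega

lemma card_balancedQuads_add_three_filter_lt (n : ℕ) :
    #((balancedQuads (n + 3)).filter fun p => p.1 < p.2.2.1)
      = #((balancedQuads n).filter fun p => p.1 ≤ p.2.2.1) := by
  apply card_nbij' (fun ⟨a, b, c, d⟩ => (a, b - 1, c - 1, d))
    (fun ⟨a, b, c, d⟩ => (a, b + 1, c + 1, d))
  all_goals
    rintro ⟨a, b, c, d⟩ hp
    simp only [mem_coe, mem_filter, mem_balancedQuads, Prod.mk.injEq, and_true, true_and] at hp ⊢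
    all_goals omega

lemma card_balancedQuads_add_three (n : ℕ) :
    #(balancedQuads (n + 3)) = #(balancedQuads n) + pairCount 2 4 n + pairCount 2 4 (n + 3) := by
  have trichotomy (m : ℕ) :=
    card_eq_filter_lt_add_filter_gt_add_filter_eq (balancedQuads m) Prod.fst fun p => p.2.2.1
  have step := card_balancedQuads_add_three_filter_lt n
  rw [card_filter_le_eq_add] at step
  simp only [card_balancedQuads_filter_gt, card_balancedQuads_filter_eq] at trichotomy step
  rw [trichotomy, trichotomy, step]
  ring

lemma pairCount_add_right {a b : ℕ} (ha : 0 < a) (hb : 0 < b) (n : ℕ) :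
    pairCount a b (n + b) = pairCount a b n + if a ∣ n + b then 1 else 0 := by
  have parts := card_filter_add_card_filter_not (fun p : ℕ × ℕ => p.2 ≠ 0)
    (s := (range (n + b + 1) ×ˢ range (n + b + 1)).filter fun p => a * p.1 + b * p.2 = n + b)
  rw [filter_filter, filter_filter] at parts
  have shifted : #((range (n + b + 1) ×ˢ range (n + b + 1)).filter
      fun p => a * p.1 + b * p.2 = n + b ∧ p.2 ≠ 0) = pairCount a b n := by
    apply card_nbij' (fun p => (p.1, p.2 - 1)) (fun p => (p.1, p.2 + 1))
    all_goals
      rintro ⟨i, j⟩ hp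
      have hi := Nat.le_mul_of_pos_left i ha
      have hj := Nat.le_mul_of_pos_left (j - 1) hb
      have hbj := (Nat.eq_zero_or_pos j).imp_right (Nat.le_mul_of_pos_right b)
      simp only [mem_coe, mem_filter, mem_product, mem_range, Prod.mk.injEq, true_and,
        Nat.mul_sub_one, Nat.mul_add_one] at hp hj ⊢
      omega
  have onAxis : #((range (n + b + 1) ×ˢ range (n + b + 1)).filter
      fun p => a * p.1 + b * p.2 = n + b ∧ ¬p.2 ≠ 0) = if a ∣ n + b then 1 else 0 := by
    split_ifs with hdvd
    · obtain ⟨k, hk⟩ := hdvd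
      rw [card_eq_one]
      refine ⟨(k, 0), ?_⟩
      ext ⟨i, j⟩
      simp only [mem_filter, mem_product, mem_range, mem_singleton, Prod.mk.injEq, not_not]
      have := Nat.le_mul_of_pos_left k ha
      constructor
      · rintro ⟨-, hij, rfl⟩
        exact ⟨Nat.eq_of_mul_eq_mul_left ha (by omega), rfl⟩
      · rintro ⟨rfl, rfl⟩
        omega
    · rw [card_eq_zero, filter_eq_empty_iff]
      rintro ⟨i, j⟩ - ⟨hij, hj⟩
      exact hdvd ⟨i, by simp_all⟩
  rw [← shifted, ← onAxis]
  exact parts.symm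

lemma pairCount_three_four_add_twelve (n : ℕ) : pairCount 3 4 (n + 12) = pairCount 3 4 n + 1 := by
  have step := pairCount_add_right (a := 3) (b := 4) (by norm_num) (by norm_num)
  rw [show n + 12 = n + 4 + 4 + 4 from rfl, step, step, step]
  split_ifs <;> omega

lemma pairCount_two_four_add_twelve (n : ℕ) :
    pairCount 2 4 (n + 12) = pairCount 2 4 n + if 2 ∣ n then 3 else 0 := by
  have step := pairCount_add_right (a := 2) (b := 4) (by norm_num) (by norm_num)
  rw [show n + 12 = n + 4 + 4 + 4 from rfl, step, step, step]
  split_ifs <;> omega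

lemma geomCoeff_of_le {s a b n : ℕ} (ha : 0 < a) (hb : 0 < b) (h : s ≤ n) :
    geomCoeff s a b n = pairCount a b (n - s) := by
  rw [geomCoeff, if_pos h, pairCount, Nat.cast_inj]
  apply card_nbij' id id
  all_goals
    rintro ⟨i, j⟩ hp
    simp only [mem_coe, mem_filter, mem_product, mem_range, id] at hp ⊢
  all_goals
    have := Nat.le_mul_of_pos_left i ha
    have := Nat.le_mul_of_pos_left j hb
    omega

def f02Coeff (n : ℕ) : ℤ :=
  (if n = 1 then (-1 : ℤ) else 0) + (if 3 ∣ n then 1 else 0)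
    + (if 2 ≤ n ∧ 4 ∣ (n - 2) then 1 else 0) + geomCoeff 8 3 4 n

lemma f02Coeff_add_twelve {n : ℕ} (hn : 8 ≤ n) : f02Coeff (n + 12) = f02Coeff n + 1 := by
  rw [f02Coeff, f02Coeff, geomCoeff_of_le three_pos four_pos (by omega),
    geomCoeff_of_le three_pos four_pos hn, show n + 12 - 8 = n - 8 + 12 by omega,
    pairCount_three_four_add_twelve]
  split_ifs <;> push_cast <;> omega

set_option maxRecDepth 4000 in
lemma f02Coeff_three_term_sum (n : ℕ) :
    f02Coeff (n + 1) + f02Coeff (n + 2) + f02Coeff (n + 3)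
      = pairCount 2 4 n + pairCount 2 4 (n + 3) := by
  induction n using Nat.strong_induction_on with
  | _ n ih =>
    by_cases hn : n < 19
    · interval_cases n <;> decide
    obtain ⟨m, rfl⟩ : ∃ m, n = m + 12 := ⟨n - 12, by omega⟩
    have parity : (if 2 ∣ m then 3 else 0) + (if 2 ∣ m + 3 then 3 else 0) = (3 : ℤ) := by
      split_ifs <;> omega
    rw [show m + 12 + 3 = m + 3 + 12 by ring, pairCount_two_four_add_twelve,
      pairCount_two_four_add_twelve]
    simp only [add_right_comm m 12, f02Coeff_add_twelve (show 8 ≤ m + 1 by omega),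
      f02Coeff_add_twelve (show 8 ≤ m + 2 by omega), f02Coeff_add_twelve (show 8 ≤ m + 3 by omega)]
    push_cast
    linear_combination ih m (by omega) - parity

lemma card_balancedQuads_eq_sum (n : ℕ) :
    (#(balancedQuads n) : ℤ) = ∑ k ∈ range (n + 1), f02Coeff k := by
  induction n using Nat.strong_induction_on with
  | _ n ih =>
    by_cases hn : n < 3
    · interval_cases n <;> decide
    obtain ⟨m, rfl⟩ : ∃ m, n = m + 3 := ⟨n - 3, by omega⟩
    rw [card_balancedQuads_add_three, sum_range_succ, sum_range_succ, sum_range_succ]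
    push_cast
    linear_combination ih m (by omega) - f02Coeff_three_term_sum m

/-- `f_{0,2}(q) = -q + 1/(1-q^3) + q^2/(1-q^4) + q^8/((1-q^3)(1-q^4))`. -/
theorem f02_eq (n : ℕ) :
    fmk 2 0 n =
      (if n = 1 then (-1 : ℤ) else 0) + (if 3 ∣ n then 1 else 0)
        + (if 2 ≤ n ∧ 4 ∣ (n - 2) then 1 else 0) + geomCoeff 8 3 4 n := by
  change fmk 2 0 n = f02Coeff n
  cases n with
  | zero => simp [fmk, akm_two_zero, card_balancedQuads_eq_sum]
  | succ m => simp [fmk, akm_two_zero, card_balancedQuads_eq_sum, sum_range_succ _ (m + 1)]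
end

section
/- Define f_{m,k}(q) by (1-q)/((zq;q)_k (q/z;q)_k) = ∑_{m∈ℤ} z^m f_{m,k}(q). Then for every k ≥ 2 and every integer m with |m| ≥ 2, all coefficients of f_{m,k}(q) are nonnegative. -/
/-!
Let `a_P(m, n)` count the pairs of partitions `(S, T)`, the parts of `S` in `P` and those of `T`
in `[1, k]`, with `|S| - |T| = m` and total size `n`; then `a_{k,m}(n) = a_{[1,k]}(m, n)`, and
exchanging `S` and `T` replaces `m` by `-m`. For `A = [1, a]`, removing one part `a` of `S` at
size `n` and one part `a - 1` at size `n - 1` reduces `a_A(m, n - 1) ≤ a_A(m, n)` to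
`a_{A ∖ {a-1}}(m, n - 1) ≤ a_{[1,a-1]}(m, n)`. Splitting off all parts `a`, resp. `a - 1`, turns
both sides into sums over `c` of `a_{[1,a-2]}(m - c, ·)`, compared termwise: for `c = 0` by
induction on `a`, for `c ≥ 1` by adding a part `1` to `S` and a part `1` or `2` to `T`, which
keeps `m` and raises the size by `2` or `3`. For `a = 2, 3` the terms are matched after
reindexing.
-/

open Finset

lemma Multiset.card_le_sum_of_forall_pos {s : Multiset ℕ} (hs : ∀ a ∈ s, 0 < a) :
    Multiset.card s ≤ s.sum := by
  simpa using Multiset.card_nsmul_le_sum (s := s) (a := 1) hs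

lemma Multiset.le_nsmul_val_of_sum_le {P : Finset ℕ} (hP : 0 ∉ P) {s : Multiset ℕ}
    (hs : ∀ a ∈ s, a ∈ P) {N : ℕ} (hN : s.sum ≤ N) : s ≤ N • P.val := by
  refine Multiset.le_iff_count.2 fun a => ?_
  rw [Multiset.count_nsmul]
  by_cases ha : a ∈ s
  · have hpos : ∀ x ∈ s, 0 < x := fun x hx => Nat.pos_of_ne_zero fun h => hP (h ▸ hs x hx)
    calc s.count a ≤ Multiset.card s := Multiset.count_le_card a s
      _ ≤ N := (Multiset.card_le_sum_of_forall_pos hpos).trans hN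
      _ = N * P.val.count a := by rw [Multiset.count_eq_one_of_mem P.nodup (hs a ha), mul_one]
  · simp [Multiset.count_eq_zero_of_notMem ha]

lemma Finset.sum_le_sum_of_injOn {ι κ : Type*} {s : Finset ι} {t : Finset κ} {f : ι → ℕ}
    {g : κ → ℕ} (σ : ι → κ) (hσ : Set.InjOn σ s) (hst : Set.MapsTo σ s t)
    (h : ∀ i ∈ s, f i ≤ g (σ i)) : ∑ i ∈ s, f i ≤ ∑ j ∈ t, g j := by
  classical
  calc ∑ i ∈ s, f i ≤ ∑ i ∈ s, g (σ i) := sum_le_sum h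
    _ = ∑ j ∈ s.image σ, g j := (sum_image hσ).symm
    _ ≤ ∑ j ∈ t, g j := sum_le_sum_of_subset (image_subset_iff.2 hst)

lemma exists_multiset_Icc_one_two {t w : ℕ} (htw : t ≤ w) (hwt : w ≤ 2 * t) :
    ∃ V : Multiset ℕ, (∀ a ∈ V, a ∈ Icc 1 2) ∧ Multiset.card V = t ∧ V.sum = w := by
  refine ⟨Multiset.replicate (w - t) 2 + Multiset.replicate (2 * t - w) 1, ?_, ?_, ?_⟩
  · intro a ha
    rcases Multiset.mem_add.1 ha with h | h <;> simp [Multiset.eq_of_mem_replicate h]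
  · simp only [Multiset.card_add, Multiset.card_replicate]
    omega
  · simp only [Multiset.sum_add, Multiset.sum_replicate, smul_eq_mul]
    omega

/-- Pairs `(S, T)` of multisets indexing the monomials `z^m q^n` of
`∏_{p ∈ P} (1 - z q^p)⁻¹ ∏_{i=1}^k (1 - q^i / z)⁻¹`; the powerset factors only make
this a `Finset` (see `mem_configs`). -/
def configs (k : ℕ) (P : Finset ℕ) (m n : ℤ) : Finset (Multiset ℕ × Multiset ℕ) :=
  ((n.toNat • P.val).powerset.toFinset ×ˢ (n.toNat • (Icc 1 k).val).powerset.toFinset).filter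
    fun x => (∀ a ∈ x.1, a ∈ P) ∧ (∀ a ∈ x.2, a ∈ Icc 1 k) ∧
      ((x.1.sum + x.2.sum : ℕ) : ℤ) = n ∧ (Multiset.card x.1 : ℤ) - Multiset.card x.2 = m

def numConfigs (k : ℕ) (P : Finset ℕ) (m n : ℤ) : ℕ := #(configs k P m n)

section numConfigs

variable {k : ℕ} {P : Finset ℕ} {m n : ℤ}

lemma mem_configs (hP : 0 ∉ P) {x : Multiset ℕ × Multiset ℕ} :
    x ∈ configs k P m n ↔ (∀ a ∈ x.1, a ∈ P) ∧ (∀ a ∈ x.2, a ∈ Icc 1 k) ∧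
      ((x.1.sum + x.2.sum : ℕ) : ℤ) = n ∧
      (Multiset.card x.1 : ℤ) - Multiset.card x.2 = m := by
  refine ⟨fun h => (mem_filter.1 h).2, fun h => mem_filter.2 ⟨?_, h⟩⟩
  obtain ⟨h1, h2, hn, -⟩ := h
  have h0 : (0 : ℕ) ∉ Icc 1 k := by simp
  simp only [mem_product, Multiset.mem_toFinset, Multiset.mem_powerset]
  exact ⟨Multiset.le_nsmul_val_of_sum_le hP h1 (by omega),
    Multiset.le_nsmul_val_of_sum_le h0 h2 (by omega)⟩

lemma numConfigs_of_neg (hn : n < 0) : numConfigs k P m n = 0 := by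
  refine card_eq_zero.2 (filter_eq_empty_iff.2 ?_)
  rintro x - ⟨-, -, hsum, -⟩
  omega

lemma numConfigs_empty_of_pos (hm : 0 < m) : numConfigs k ∅ m n = 0 := by
  refine card_eq_zero.2 (filter_eq_empty_iff.2 ?_)
  rintro x - ⟨h1, -, -, hcard⟩
  rw [Multiset.eq_zero_of_forall_notMem (s := x.1) fun a ha => by simpa using h1 a ha] at hcard
  simp only [Multiset.card_zero, CharP.cast_eq_zero, zero_sub] at hcard
  omega

lemma numConfigs_le_add (hP : 0 ∉ P) {U V : Multiset ℕ} (hU : ∀ a ∈ U, a ∈ P)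
    (hV : ∀ a ∈ V, a ∈ Icc 1 k) :
    numConfigs k P m n ≤
      numConfigs k P (m + Multiset.card U - Multiset.card V) (n + U.sum + V.sum) := by
  refine card_le_card_of_injOn (fun x => (x.1 + U, x.2 + V)) (fun x hx => ?_) ?_
  · rw [mem_coe, mem_configs hP] at hx ⊢
    obtain ⟨h1, h2, hn, hm⟩ := hx
    refine ⟨fun a ha => ?_, fun a ha => ?_, ?_, ?_⟩
    · exact (Multiset.mem_add.1 ha).elim (h1 a) (hU a)
    · exact (Multiset.mem_add.1 ha).elim (h2 a) (hV a)
    · simp only [Multiset.sum_add]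
      push_cast at hn ⊢
      omega
    · simp only [Multiset.card_add]
      push_cast
      omega
  · intro x _ y _ hxy
    simp only [Prod.mk.injEq, add_left_inj] at hxy
    exact Prod.ext hxy.1 hxy.2

lemma numConfigs_eq_erase_add (hP : 0 ∉ P) {p : ℕ} (hp : p ∈ P) :
    numConfigs k P m n = numConfigs k (P.erase p) m n + numConfigs k P (m - 1) (n - p) := by
  have hP' : 0 ∉ P.erase p := fun h => hP (mem_of_mem_erase h)
  rw [numConfigs, ← card_filter_add_card_filter_not (fun x => p ∈ x.1), add_comm]
  congr 1
  · congr 1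
    ext x
    rw [mem_filter, mem_configs hP, mem_configs hP']
    simp only [mem_erase]
    constructor
    · rintro ⟨⟨h1, h2, h3, h4⟩, h5⟩
      exact ⟨fun a ha => ⟨fun he => h5 (he ▸ ha), h1 a ha⟩, h2, h3, h4⟩
    · rintro ⟨h1, h2, h3, h4⟩
      exact ⟨⟨fun a ha => (h1 a ha).2, h2, h3, h4⟩, fun h => (h1 p h).1 rfl⟩
  · refine card_nbij' (fun x => (x.1.erase p, x.2)) (fun y => (p ::ₘ y.1, y.2))
      (fun x hx => ?_) (fun y hy => ?_) (fun x hx => ?_) (fun y _ => ?_)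
    · rw [mem_coe, mem_filter, mem_configs hP] at hx
      obtain ⟨⟨h1, h2, h3, h4⟩, h5⟩ := hx
      rw [← Multiset.cons_erase h5, Multiset.sum_cons] at h3
      rw [← Multiset.cons_erase h5, Multiset.card_cons] at h4
      rw [mem_coe, mem_configs hP]
      refine ⟨fun a ha => h1 a (Multiset.mem_of_mem_erase ha), h2, ?_, ?_⟩ <;>
        push_cast at * <;> omega
    · rw [mem_coe, mem_configs hP] at hy
      obtain ⟨h1, h2, h3, h4⟩ := hy
      rw [mem_coe, mem_filter, mem_configs hP, Multiset.sum_cons, Multiset.card_cons]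
      refine ⟨⟨fun a ha => ?_, h2, ?_, ?_⟩, Multiset.mem_cons_self p _⟩
      · exact (Multiset.mem_cons.1 ha).elim (fun h => h ▸ hp) (h1 a)
      all_goals push_cast at *; omega
    · exact Prod.ext (Multiset.cons_erase (mem_filter.1 hx).2) rfl
    · exact Prod.ext (Multiset.erase_cons_head p y.1) rfl

lemma numConfigs_eq_sum (hP : 0 ∉ P) {p : ℕ} (hp : p ∈ P) {B : ℕ} (hB : n < p * B) :
    numConfigs k P m n = ∑ c ∈ range B, numConfigs k (P.erase p) (m - c) (n - p * c) := by
  induction B generalizing m n with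
  | zero => simpa using numConfigs_of_neg (by simpa using hB)
  | succ B ih =>
    rw [numConfigs_eq_erase_add hP hp, sum_range_succ', ih (by push_cast at hB; linarith)]
    simp only [Nat.cast_add, Nat.cast_one, Nat.cast_zero, sub_zero, mul_zero, add_comm]
    congr 1
    refine sum_congr rfl fun c _ => ?_
    congr 1 <;> ring

lemma numConfigs_le_sub_add (hk : 2 ≤ k) (hP : 0 ∉ P) {t w : ℕ} (htw : t ≤ w)
    (hwt : w ≤ 2 * t) : numConfigs k P m n ≤ numConfigs k P (m - t) (n + w) := by
  obtain ⟨V, hV, hcard, hsum⟩ := exists_multiset_Icc_one_two htw hwt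
  have := numConfigs_le_add (k := k) (m := m) (n := n) hP (U := 0)
    (fun a ha => absurd ha (Multiset.notMem_zero a))
    fun a ha => Icc_subset_Icc_right hk (hV a ha)
  simpa [hcard, hsum, sub_eq_add_neg] using this

lemma numConfigs_le_add_of_two_le (hk : 2 ≤ k) (hP : 0 ∉ P) (h1 : 1 ∈ P) {s : ℕ}
    (hs : 2 ≤ s) :
    numConfigs k P m n ≤ numConfigs k P m (n + s) := by
  obtain ⟨V, hV, hcard, hsum⟩ := exists_multiset_Icc_one_two (t := s / 2) (w := s - s / 2)
    (by omega) (by omega)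
  have := numConfigs_le_add (k := k) (m := m) (n := n) hP (U := Multiset.replicate (s / 2) 1)
    (fun a ha => Multiset.eq_of_mem_replicate ha ▸ h1)
    fun a ha => Icc_subset_Icc_right hk (hV a ha)
  simp only [Multiset.card_replicate, hcard, add_sub_cancel_right, Multiset.sum_replicate,
    smul_eq_mul, mul_one, hsum] at this
  convert this using 2
  push_cast
  omega

lemma numConfigs_singleton_one (hm : 0 < m) :
    numConfigs k {1} m n = numConfigs k {1} (m - 1) (n - 1) := by
  simpa [numConfigs_empty_of_pos hm] using
    numConfigs_eq_erase_add (k := k) (m := m) (n := n) (P := {1}) (by simp) (mem_singleton_self 1)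

lemma numConfigs_Icc_le_of_sum_le {b B : ℕ} (hB : n < B)
    (h : ∑ c ∈ range B, numConfigs k (Icc 1 b) (m - c) (n - 1 - (b + 2) * c) ≤
      ∑ c ∈ range (2 * B), numConfigs k (Icc 1 b) (m - c) (n - (b + 1) * c)) :
    numConfigs k (Icc 1 (b + 2)) m (n - 1) ≤ numConfigs k (Icc 1 (b + 2)) m n := by
  have h0 : ∀ {P : Finset ℕ}, P ⊆ Icc 1 (b + 2) → 0 ∉ P := fun hP h => by simpa using hP h
  have hA : (Icc 1 (b + 2)).erase (b + 2) = Icc 1 (b + 1) := by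
    ext; simp only [mem_erase, mem_Icc]; omega
  have hA' : ((Icc 1 (b + 2)).erase (b + 1)).erase (b + 2) = Icc 1 b := by
    ext; simp only [mem_erase, mem_Icc]; omega
  have hA'' : (Icc 1 (b + 1)).erase (b + 1) = Icc 1 b := by
    ext; simp only [mem_erase, mem_Icc]; omega
  have hB1 : n - 1 < ((b + 2 : ℕ) : ℤ) * B := by push_cast; nlinarith
  have hB2 : n < ((b + 1 : ℕ) : ℤ) * (2 * B : ℕ) := by push_cast; nlinarith
  have e1 := numConfigs_eq_erase_add (k := k) (m := m) (n := n) (h0 subset_rfl)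
    (p := b + 2) (by simp)
  have e2 := numConfigs_eq_erase_add (k := k) (m := m) (n := n - 1) (h0 subset_rfl)
    (p := b + 1) (by simp)
  have s1 := numConfigs_eq_sum (k := k) (m := m) (P := (Icc 1 (b + 2)).erase (b + 1))
    (h0 (erase_subset _ _)) (p := b + 2) (by simp) hB1
  have s2 := numConfigs_eq_sum (k := k) (m := m) (P := Icc 1 (b + 1))
    (h0 (Icc_subset_Icc_right (by omega))) (p := b + 1) (by simp) hB2
  rw [hA] at e1
  rw [hA'] at s1
  rw [hA''] at s2
  have hshift : n - 1 - ((b + 1 : ℕ) : ℤ) = n - ((b + 2 : ℕ) : ℤ) := by push_cast; ring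
  rw [hshift] at e2
  push_cast at s1 s2
  omega

lemma sum_numConfigs_empty_le (hk : 2 ≤ k) (hm : 0 < m) (B : ℕ) :
    ∑ c ∈ range B, numConfigs k ∅ (m - c) (n - 1 - 2 * c) ≤
      ∑ c ∈ range (2 * B), numConfigs k ∅ (m - c) (n - c) := by
  -- The term `c` gains `(c + 1) / 2` parts `1` or `2` of `T`, of total `c + 1 - (c + 1) / 2`.
  refine sum_le_sum_of_injOn (fun c => c + (c + 1) / 2)
    (fun x _ y _ hxy => by simp only at hxy; omega)
    (fun c hc => by simp only [coe_range, Set.mem_Iio] at hc ⊢; omega) fun c _ => ?_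
  rcases Nat.eq_zero_or_pos c with rfl | hc
  · simp [numConfigs_empty_of_pos hm]
  have := numConfigs_le_sub_add hk (notMem_empty 0) (m := m - c) (n := n - 1 - 2 * c)
    (t := (c + 1) / 2) (w := c + 1 - (c + 1) / 2) (by omega) (by omega)
  convert this using 2 <;> push_cast <;> omega

lemma sum_numConfigs_singleton_one_le (hk : 2 ≤ k) (hm : 0 < m) (B : ℕ) :
    ∑ c ∈ range B, numConfigs k {1} (m - c) (n - 1 - 3 * c) ≤
      ∑ c ∈ range (2 * B), numConfigs k {1} (m - c) (n - 2 * c) := by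
  have h0 : (0 : ℕ) ∉ ({1} : Finset ℕ) := by simp
  refine sum_le_sum_of_injOn (Equiv.swap 0 1) (Equiv.swap 0 1).injective.injOn
    (fun c hc => ?_) fun c _ => ?_
  · simp only [coe_range, Set.mem_Iio] at hc ⊢
    rcases Nat.lt_or_ge c 2 with h | h
    · interval_cases c <;>
        simp only [Equiv.swap_apply_left, Equiv.swap_apply_right] <;> omega
    · rw [Equiv.swap_apply_of_ne_of_ne (by omega) (by omega)]; omega
  match c with
  | 0 =>
    simpa [sub_sub, one_add_one_eq_two] using (numConfigs_singleton_one (k := k) (n := n - 1) hm).le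
  | 1 =>
    have h3 := numConfigs_le_add_of_two_le hk h0 (mem_singleton_self 1) (m := m) (n := n - 3)
      (s := 3) (by norm_num)
    rw [numConfigs_singleton_one hm] at h3
    simpa [show n - 3 - 1 = n - 1 - 3 by ring] using h3
  | c + 2 =>
    rw [Equiv.swap_apply_of_ne_of_ne (by omega) (by omega)]
    convert numConfigs_le_add_of_two_le hk h0 (mem_singleton_self 1) (m := m - (c + 2 : ℕ))
      (n := n - 1 - 3 * (c + 2 : ℕ)) (s := c + 3) (by omega) using 2
    push_cast
    ring

lemma sum_numConfigs_Icc_le (hk : 2 ≤ k) {b : ℕ} (hb : 1 ≤ b)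
    (ih : numConfigs k (Icc 1 b) m (n - 1) ≤ numConfigs k (Icc 1 b) m n) (B : ℕ) :
    ∑ c ∈ range B, numConfigs k (Icc 1 b) (m - c) (n - 1 - (b + 2) * c) ≤
      ∑ c ∈ range (2 * B), numConfigs k (Icc 1 b) (m - c) (n - (b + 1) * c) := by
  refine sum_le_sum_of_injOn (fun c => c) (fun _ _ _ _ h => h)
    (fun c hc => by simp only [coe_range, Set.mem_Iio] at hc ⊢; omega) fun c _ => ?_
  match c with
  | 0 => simpa using ih
  | c + 1 =>
    convert numConfigs_le_add_of_two_le hk (P := Icc 1 b) (by simp) (mem_Icc.2 ⟨le_rfl, hb⟩)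
      (m := m - (c + 1 : ℕ))
      (n := n - 1 - (b + 2) * (c + 1 : ℕ)) (s := c + 2) (by omega) using 2
    push_cast
    ring

theorem numConfigs_Icc_sub_one_le (hk : 2 ≤ k) (hm : 0 < m) :
    ∀ b : ℕ, numConfigs k (Icc 1 (b + 2)) m (n - 1) ≤ numConfigs k (Icc 1 (b + 2)) m n
  | 0 => numConfigs_Icc_le_of_sum_le (B := n.toNat + 1) (by omega)
      (by simpa using sum_numConfigs_empty_le hk hm _)
  | 1 => numConfigs_Icc_le_of_sum_le (B := n.toNat + 1) (by omega)
      (by simpa using sum_numConfigs_singleton_one_le hk hm _)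
  | b + 2 => numConfigs_Icc_le_of_sum_le (B := n.toNat + 1) (by omega)
      (sum_numConfigs_Icc_le hk (by omega) (numConfigs_Icc_sub_one_le hk hm b) _)

end numConfigs

def partsOf {k : ℕ} (f : Fin k → ℕ) : Multiset ℕ := ∑ i, f i • {(i : ℕ) + 1}

section partsOf

variable {k : ℕ}

lemma count_partsOf (f : Fin k → ℕ) (a : ℕ) :
    (partsOf f).count a = ∑ i : Fin k, if (i : ℕ) + 1 = a then f i else 0 := by
  simp [partsOf, Multiset.count_sum', Multiset.count_singleton, eq_comm]

lemma count_partsOf_succ (f : Fin k → ℕ) (i : Fin k) :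
    (partsOf f).count ((i : ℕ) + 1) = f i := by
  simp [count_partsOf, Fin.val_inj]

lemma mem_partsOf {f : Fin k → ℕ} {a : ℕ} (ha : a ∈ partsOf f) : a ∈ Icc 1 k := by
  obtain ⟨i, -, hi⟩ := Multiset.mem_sum.1 ha
  rw [Multiset.nsmul_singleton] at hi
  rw [Multiset.eq_of_mem_replicate hi]
  simp [Nat.succ_le_of_lt i.2]

lemma sum_partsOf (f : Fin k → ℕ) : (partsOf f).sum = ∑ i : Fin k, ((i : ℕ) + 1) * f i := by
  simp [partsOf, Multiset.sum_sum, Multiset.sum_nsmul, mul_comm]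

lemma card_partsOf (f : Fin k → ℕ) : Multiset.card (partsOf f) = ∑ i, f i := by
  simp [partsOf]

lemma partsOf_count {s : Multiset ℕ} (hs : ∀ a ∈ s, a ∈ Icc 1 k) :
    partsOf (fun i : Fin k => s.count ((i : ℕ) + 1)) = s := by
  ext a
  rw [count_partsOf]
  by_cases ha : a ∈ Icc 1 k
  · obtain ⟨h1, h2⟩ := mem_Icc.1 ha
    rw [Fintype.sum_eq_single ⟨a - 1, by omega⟩
      fun i hi => if_neg fun h => hi (Fin.ext (by simp only; omega))]
    simp only
    rw [if_pos (by omega), Nat.sub_add_cancel h1]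
  · rw [Multiset.count_eq_zero_of_notMem fun h => ha (hs a h)]
    exact sum_eq_zero fun i _ => if_neg fun h => ha (mem_Icc.2 (by omega))

end partsOf

lemma akm_eq_numConfigs (k : ℕ) (m : ℤ) (n : ℕ) : akm k m n = numConfigs k (Icc 1 k) m n := by
  have h0 : 0 ∉ Icc 1 k := by simp
  have hcond : ∀ f g : Fin k → ℕ,
      ((∑ i : Fin k, (i.1 + 1) * (f i + g i) = n) ∧
        (∑ i, (f i : ℤ)) - ∑ i, (g i : ℤ) = m) ↔
        ((((partsOf f).sum + (partsOf g).sum : ℕ) : ℤ) = n ∧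
          (Multiset.card (partsOf f) : ℤ) - Multiset.card (partsOf g) = m) := by
    intro f g
    rw [sum_partsOf, sum_partsOf, card_partsOf, card_partsOf, ← sum_add_distrib, Nat.cast_inj]
    simp only [mul_add, Nat.cast_sum]
  refine card_bij (fun p _ => (partsOf fun i => (p.1 i : ℕ), partsOf fun i => (p.2 i : ℕ)))
    (fun p hp => ?_) (fun p _ q _ h => ?_) fun x hx => ?_
  · rw [mem_configs h0]
    exact ⟨fun _ => mem_partsOf, fun _ => mem_partsOf, (hcond _ _).1 (mem_filter.1 hp).2⟩
  · simp only [Prod.mk.injEq] at h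
    have hval : ∀ {f g : Fin k → Fin (n + 1)},
        (partsOf fun i => (f i : ℕ)) = partsOf (fun i => g i) → f = g := fun h =>
      funext fun i => Fin.ext <| by
        simpa [count_partsOf_succ] using congrArg (·.count ((i : ℕ) + 1)) h
    exact Prod.ext (hval h.1) (hval h.2)
  · obtain ⟨h1, h2, hsum, hcard⟩ := (mem_configs h0).1 hx
    have hle : ∀ (s : Multiset ℕ) (a : ℕ), (∀ a ∈ s, a ∈ Icc 1 k) → s.sum ≤ n →
        s.count a < n + 1 :=
      fun s a hs hn => Nat.lt_succ_of_le <| (Multiset.count_le_card a s).trans <|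
        (Multiset.card_le_sum_of_forall_pos fun b hb => (mem_Icc.1 (hs b hb)).1).trans hn
    refine ⟨(fun i => ⟨x.1.count ((i : ℕ) + 1), hle _ _ h1 (by omega)⟩,
      fun i => ⟨x.2.count ((i : ℕ) + 1), hle _ _ h2 (by omega)⟩), ?_, ?_⟩
    · refine mem_filter.2 ⟨mem_univ _, (hcond _ _).2 ?_⟩
      rw [partsOf_count h1, partsOf_count h2]
      exact ⟨hsum, hcard⟩
    · exact Prod.ext (partsOf_count h1) (partsOf_count h2)

lemma numConfigs_Icc_neg (k : ℕ) (m n : ℤ) :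
    numConfigs k (Icc 1 k) (-m) n = numConfigs k (Icc 1 k) m n := by
  have h0 : 0 ∉ Icc 1 k := by simp
  refine card_nbij' Prod.swap Prod.swap (fun x hx => ?_) (fun x hx => ?_) (fun _ _ => rfl)
    fun _ _ => rfl <;>
  · rw [mem_coe, mem_configs h0] at hx ⊢
    obtain ⟨h1, h2, hsum, hcard⟩ := hx
    refine ⟨h2, h1, by rw [← hsum]; simp [add_comm], ?_⟩
    simp only [Prod.fst_swap, Prod.snd_swap]
    omega

lemma akm_le_akm_succ {k : ℕ} (hk : 2 ≤ k) {m : ℤ} (hm : m ≠ 0) (n : ℕ) :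
    akm k m n ≤ akm k m (n + 1) := by
  rw [akm_eq_numConfigs, akm_eq_numConfigs]
  obtain ⟨b, rfl⟩ : ∃ b, k = b + 2 := ⟨k - 2, by omega⟩
  rcases hm.lt_or_gt with hneg | hpos
  · rw [← numConfigs_Icc_neg _ m, ← numConfigs_Icc_neg _ m]
    simpa using numConfigs_Icc_sub_one_le hk (neg_pos.2 hneg) (n := n + 1) b
  · simpa using numConfigs_Icc_sub_one_le hk hpos (n := n + 1) b
/-- For `k ≥ 2` and `|m| ≥ 2`, all coefficients of `f_{m,k}(q)` are nonnegative. -/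
theorem fmk_nonneg (k : ℕ) (hk : 2 ≤ k) (m : ℤ) (hm : 2 ≤ m.natAbs) (n : ℕ) :
    0 ≤ fmk k m n := by
  cases n with
  | zero => simp [fmk]
  | succ n =>
    have := akm_le_akm_succ hk (by omega : m ≠ 0) n
    simp only [fmk, Nat.add_one_ne_zero, if_false, Nat.add_sub_cancel]
    omega
end

section
/- Define f_{m,k}(q) by (1-q)/((zq;q)_k (q/z;q)_k) = ∑_{m∈ℤ} z^m f_{m,k}(q). Then for every k ≥ 2, the constant coefficient of f_{0,k}(q) is 1, the coefficient of q^1 is at least −1, the coefficient of q^2 is at least 1, and all other coefficients are nonnegative. -/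
open Finset

theorem Finset.sum_le_sum_of_le_add_of_add_le {ι M : Type*} [AddCommMonoid M] [PartialOrder M]
    [IsOrderedCancelAddMonoid M] {s : Finset ι} {f g : ι → M} {b c : ι} (x : M)
    (hb : b ∈ s) (hc : c ∈ s) (hbc : b ≠ c) (hfg : ∀ i ∈ s, i ≠ b → i ≠ c → f i ≤ g i)
    (hfb : f b ≤ g b + x) (hfc : f c + x ≤ g c) :
    ∑ i ∈ s, f i ≤ ∑ i ∈ s, g i := by
  classical
  have hc' : c ∈ s.erase b := mem_erase.2 ⟨hbc.symm, hc⟩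
  rw [← add_sum_erase s f hb, ← add_sum_erase s g hb, ← add_sum_erase _ f hc',
    ← add_sum_erase _ g hc', ← add_assoc, ← add_assoc]
  refine add_le_add (le_of_add_le_add_right (a := x) ?_) (sum_le_sum fun i hi => ?_)
  · calc f b + f c + x ≤ g b + x + g c := by
          rw [add_assoc]; exact add_le_add hfb hfc
      _ = g b + g c + x := by rw [add_right_comm]
  · obtain ⟨hic, hi⟩ := mem_erase.1 hi
    obtain ⟨hib, hi⟩ := mem_erase.1 hi
    exact hfg i hi hib hic

section ShiftedCoeff

def MonotoneAwayFromOrigin (A : ℤ → ℕ → ℕ) : Prop :=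
  ∀ d n, d ≠ 0 ∨ n ≠ 0 → A d n ≤ A d (n + 1)

variable (m : ℕ) (A : ℤ → ℕ → ℕ)

/-- The coefficient of `z^d q^n` in `z^(r-s) q^(m(r+s)) ∑ A e n' z^e q^n'`; summed over `(r, s)`
it is the coefficient of `z^d q^n` in `∑ A e n' z^e q^n' / ((1 - z q^m)(1 - q^m / z))`. -/
def shiftedCoeff (d : ℤ) (n : ℕ) (rs : ℕ × ℕ) : ℕ :=
  if m * (rs.1 + rs.2) ≤ n then A (d - rs.1 + rs.2) (n - m * (rs.1 + rs.2)) else 0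

variable {m A}

lemma shiftedCoeff_le_succ (hA : MonotoneAwayFromOrigin A) {d : ℤ} {n : ℕ} {rs : ℕ × ℕ}
    (h : d - rs.1 + rs.2 ≠ 0 ∨ m * (rs.1 + rs.2) ≠ n) :
    shiftedCoeff m A d n rs ≤ shiftedCoeff m A d (n + 1) rs := by
  unfold shiftedCoeff
  split_ifs with h₁ h₂
  · rw [Nat.sub_add_comm h₁]
    exact hA _ _ (by omega)
  · omega
  · exact Nat.zero_le _
  · exact le_rfl

lemma shiftedCoeff_le_succ_add_one (hA : MonotoneAwayFromOrigin A) (h00 : A 0 0 ≤ A 0 1 + 1)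
    (d : ℤ) (n : ℕ) (rs : ℕ × ℕ) :
    shiftedCoeff m A d n rs ≤ shiftedCoeff m A d (n + 1) rs + 1 := by
  by_cases hbad : d - rs.1 + rs.2 = 0 ∧ m * (rs.1 + rs.2) = n
  · obtain ⟨he, hn⟩ := hbad
    simp only [shiftedCoeff, hn, le_refl, Nat.le_succ, if_true, he, Nat.sub_self,
      Nat.add_sub_cancel_left]
    exact h00
  · exact (shiftedCoeff_le_succ hA (by tauto)).trans (Nat.le_succ _)

lemma shiftedCoeff_add_one_le (hgain : ∀ e : ℤ, e = 1 ∨ e = -1 → A e m < A e (m + 1))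
    {d : ℤ} {n : ℕ} {rs : ℕ × ℕ} (he : d - rs.1 + rs.2 = 1 ∨ d - rs.1 + rs.2 = -1)
    (hn : m * (rs.1 + rs.2) + m = n) :
    shiftedCoeff m A d n rs + 1 ≤ shiftedCoeff m A d (n + 1) rs := by
  have h₁ : n - m * (rs.1 + rs.2) = m := by omega
  have h₂ : n + 1 - m * (rs.1 + rs.2) = m + 1 := by omega
  simp only [shiftedCoeff, if_pos (show m * (rs.1 + rs.2) ≤ n by omega),
    if_pos (show m * (rs.1 + rs.2) ≤ n + 1 by omega), h₁, h₂]
  exact hgain _ he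


lemma sum_shiftedCoeff_le_succ (hm : 0 < m) (hA : MonotoneAwayFromOrigin A)
    (h00 : A 0 0 ≤ A 0 1 + 1) (hgain : ∀ e : ℤ, e = 1 ∨ e = -1 → A e m < A e (m + 1))
    {d : ℤ} {n N : ℕ} (hdn : d ≠ 0 ∨ n ≠ 0) :
    ∑ rs ∈ range N ×ˢ range N, shiftedCoeff m A d n rs ≤
      ∑ rs ∈ range N ×ˢ range N, shiftedCoeff m A d (n + 1) rs := by
  -- Only the term that meets `A 0 0 > A 0 1` can decrease; the term of a predecessor pair,
  -- meeting `A (±1) m < A (±1) (m + 1)`, makes up for it.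
  by_cases hbad : ∃ b ∈ range N ×ˢ range N, d - b.1 + b.2 = 0 ∧ m * (b.1 + b.2) = n
  · obtain ⟨⟨r, s⟩, hb, he, hn⟩ := hbad
    have hunique (i : ℕ × ℕ) (hie : d - i.1 + i.2 = 0) (hin : m * (i.1 + i.2) = n) :
        i = (r, s) := by
      have : i.1 + i.2 = r + s := Nat.eq_of_mul_eq_mul_left hm (hin.trans hn.symm)
      ext <;> dsimp only at he ⊢ <;> omega
    obtain ⟨c, hc, hcb, hce, hcn⟩ : ∃ c ∈ range N ×ˢ range N, c ≠ (r, s) ∧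
        (d - c.1 + c.2 = 1 ∨ d - c.1 + c.2 = -1) ∧ m * (c.1 + c.2) + m = n := by
      simp only [mem_product, mem_range] at hb
      rcases r with _ | r
      · rcases s with _ | s
        · simp only [add_zero, mul_zero, Nat.cast_zero, sub_zero] at he hn
          omega
        · refine ⟨(0, s), by simp only [mem_product, mem_range]; omega, by simp,
            Or.inr (by push_cast at he ⊢; omega), by rw [← hn]; ring⟩
      · refine ⟨(r, s), by simp only [mem_product, mem_range]; omega, by simp,
          Or.inl (by push_cast at he ⊢; omega), by rw [← hn]; ring⟩
    exact sum_le_sum_of_le_add_of_add_le 1 hb hc hcb.symm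
      (fun i _ hib _ =>
        shiftedCoeff_le_succ hA (not_and_or.1 fun h => hib (hunique i h.1 h.2)))
      (shiftedCoeff_le_succ_add_one hA h00 _ _ _) (shiftedCoeff_add_one_le hgain hce hcn)
  · exact sum_le_sum fun i hi =>
      shiftedCoeff_le_succ hA (not_and_or.1 fun h => hbad ⟨i, hi, h⟩)

lemma sum_shiftedCoeff_lt_succ (hm : 2 ≤ m) (hA : MonotoneAwayFromOrigin A) (h : A 0 1 < A 0 2)
    {N : ℕ} (hN : 1 < N) :
    ∑ rs ∈ range N ×ˢ range N, shiftedCoeff m A 1 (m + 1) rs <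
      ∑ rs ∈ range N ×ˢ range N, shiftedCoeff m A 1 (m + 2) rs := by
  refine sum_lt_sum (fun i _ => shiftedCoeff_le_succ hA (Or.inr fun hi => ?_))
    ⟨(1, 0), by simp only [mem_product, mem_range]; omega, ?_⟩
  · have : m ∣ 1 := (Nat.dvd_add_right (dvd_refl m)).1 ⟨_, hi.symm⟩
    have := Nat.le_of_dvd one_pos this
    omega
  · simpa [shiftedCoeff] using h

end ShiftedCoeff

namespace PartitionPair

abbrev Mult (k : ℕ) := (Fin k → ℕ) × (Fin k → ℕ)

variable {k : ℕ}

def weight (p : Mult k) : ℕ := ∑ i, (i.1 + 1) * (p.1 i + p.2 i)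

def balance (p : Mult k) : ℤ := ∑ i, (p.1 i : ℤ) - ∑ i, (p.2 i : ℤ)

lemma add_le_weight (p : Mult k) (i : Fin k) : p.1 i + p.2 i ≤ weight p :=
  calc p.1 i + p.2 i ≤ (i.1 + 1) * (p.1 i + p.2 i) := Nat.le_mul_of_pos_left _ i.1.succ_pos
    _ ≤ weight p := single_le_sum (f := fun i : Fin k => (i.1 + 1) * (p.1 i + p.2 i))
        (fun _ _ => Nat.zero_le _) (mem_univ i)

variable (k) in
def level (d : ℤ) (n : ℕ) : Finset (Mult k) :=
  {p ∈ Fintype.piFinset (fun _ => range (n + 1)) ×ˢ Fintype.piFinset (fun _ => range (n + 1)) |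
    weight p = n ∧ balance p = d}

lemma mem_level {d : ℤ} {n : ℕ} {p : Mult k} :
    p ∈ level k d n ↔ weight p = n ∧ balance p = d := by
  simp only [level, mem_filter, mem_product, Fintype.mem_piFinset, mem_range,
    and_iff_right_iff_imp]
  rintro ⟨rfl, -⟩
  refine ⟨fun i => ?_, fun i => ?_⟩ <;> have := add_le_weight p i <;> omega

lemma card_level (d : ℤ) (n : ℕ) : #(level k d n) = akm k d n := by
  refine (card_nbij (fun a => (fun i => (a.1 i : ℕ), fun i => (a.2 i : ℕ))) ?_ ?_ ?_).symm
  · intro a ha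
    simpa [mem_level, weight, balance] using ha
  · intro a _ b _ h
    simp only [Prod.mk.injEq, funext_iff] at h
    ext i <;> simp [h.1, h.2]
  · intro p hp
    rw [mem_coe, mem_level] at hp
    refine ⟨(fun i => ⟨p.1 i, ?_⟩, fun i => ⟨p.2 i, ?_⟩), ?_, rfl⟩
    · have := add_le_weight p i; omega
    · have := add_le_weight p i; omega
    · simpa [weight, balance] using hp

lemma card_level_neg (d : ℤ) (n : ℕ) : #(level k (-d) n) = #(level k d n) := by
  refine card_nbij Prod.swap (fun p hp => ?_) Prod.swap_injective.injOn
    (fun p hp => ⟨p.swap, ?_, p.swap_swap⟩)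
  all_goals
    simp only [mem_coe, mem_level, weight, balance, Prod.fst_swap, Prod.snd_swap] at hp ⊢
    simp only [add_comm (p.2 _)]
    omega

def snoc (q : Mult k) (r s : ℕ) : Mult (k + 1) := (Fin.snoc q.1 r, Fin.snoc q.2 s)

def init (p : Mult (k + 1)) : Mult k := (Fin.init p.1, Fin.init p.2)

lemma weight_snoc (q : Mult k) (r s : ℕ) :
    weight (snoc q r s) = weight q + (k + 1) * (r + s) := by
  simp [weight, snoc, Fin.sum_univ_castSucc]

lemma balance_snoc (q : Mult k) (r s : ℕ) : balance (snoc q r s) = balance q + r - s := by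
  simp [balance, snoc, Fin.sum_univ_castSucc]
  ring

lemma snoc_init (p : Mult (k + 1)) :
    snoc (init p) (p.1 (Fin.last k)) (p.2 (Fin.last k)) = p := by
  simp [snoc, init, Fin.snoc_init_self]

lemma init_snoc (q : Mult k) (r s : ℕ) : init (snoc q r s) = q := by
  simp [snoc, init, Fin.init_snoc]

lemma card_filter_last_eq (d : ℤ) (n r s : ℕ) :
    #{p ∈ level (k + 1) d n | (p.1 (Fin.last k), p.2 (Fin.last k)) = (r, s)} =
      shiftedCoeff (k + 1) (akm k) d n (r, s) := by
  unfold shiftedCoeff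
  dsimp only
  split_ifs with h
  · rw [← card_level]
    refine card_nbij' init (fun q => snoc q r s) (fun p hp => ?_) (fun q hq => ?_)
      (fun p hp => ?_) (fun q _ => init_snoc q r s)
    · simp only [coe_filter, mem_level, Prod.mk.injEq, Set.mem_ofPred_eq] at hp
      obtain ⟨⟨hw, hb⟩, rfl, rfl⟩ := hp
      have hw' := weight_snoc (init p) (p.1 (Fin.last k)) (p.2 (Fin.last k))
      have hb' := balance_snoc (init p) (p.1 (Fin.last k)) (p.2 (Fin.last k))
      rw [snoc_init] at hw' hb'
      simp only [mem_coe, mem_level]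
      omega
    · simp only [mem_coe, mem_level] at hq
      simp only [coe_filter, mem_level, weight_snoc, balance_snoc, Set.mem_ofPred_eq]
      refine ⟨⟨by omega, by omega⟩, by simp [snoc]⟩
    · simp only [coe_filter, Prod.mk.injEq, Set.mem_ofPred_eq] at hp
      obtain ⟨-, rfl, rfl⟩ := hp
      exact snoc_init p
  · refine card_eq_zero.2 (filter_eq_empty_iff.2 fun p hp hlast => h ?_)
    simp only [Prod.mk.injEq] at hlast
    rw [mem_level, ← snoc_init p, weight_snoc, hlast.1, hlast.2] at hp
    omega

lemma akm_succ_eq_sum {d : ℤ} {n N : ℕ} (hN : n < N) :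
    akm (k + 1) d n = ∑ rs ∈ range N ×ˢ range N, shiftedCoeff (k + 1) (akm k) d n rs := by
  rw [← card_level, card_eq_sum_card_fiberwise (t := range N ×ˢ range N)
    (f := fun p : Mult (k + 1) => (p.1 (Fin.last k), p.2 (Fin.last k)))]
  · exact sum_congr rfl fun rs _ => card_filter_last_eq d n rs.1 rs.2
  · intro p hp
    have := add_le_weight p (Fin.last k)
    simp only [mem_coe, mem_level] at hp
    simp only [mem_coe, mem_product, mem_range]
    omega

lemma akm_succ_of_lt {d : ℤ} {n : ℕ} (hn : n < k + 1) : akm (k + 1) d n = akm k d n := by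
  rw [akm_succ_eq_sum n.lt_succ_self, sum_eq_single (0, 0)]
  · simp [shiftedCoeff]
  · intro rs _ hrs
    have : rs.1 + rs.2 ≠ 0 := fun h => hrs (Prod.ext (by omega) (by omega))
    simp only [shiftedCoeff, ite_eq_right_iff]
    intro h
    nlinarith [Nat.one_le_iff_ne_zero.2 this]
  · simp

lemma akm_neg (d : ℤ) (n : ℕ) : akm k (-d) n = akm k d n := by
  rw [← card_level, ← card_level, card_level_neg]

lemma mem_level_two {d : ℤ} {n : ℕ} {p : Mult 2} :
    p ∈ level 2 d n ↔ p.1 0 + p.2 0 + 2 * (p.1 1 + p.2 1) = n ∧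
      (p.1 0 + p.1 1 : ℤ) - p.2 0 - p.2 1 = d := by
  simp only [mem_level, weight, balance, Fin.sum_univ_two, Fin.val_zero, Fin.val_one]
  omega

lemma mult_two_ext {p q : Mult 2} (h₁ : p.1 0 = q.1 0) (h₂ : p.1 1 = q.1 1)
    (h₃ : p.2 0 = q.2 0) (h₄ : p.2 1 = q.2 1) : p = q :=
  Prod.ext (funext (Fin.forall_fin_two.2 ⟨h₁, h₂⟩)) (funext (Fin.forall_fin_two.2 ⟨h₃, h₄⟩))

/-- For `δ ≥ 0`, a pair in `level 2 δ n` with a part `1` in `α` has one of them enlarged to `2`.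
A pair without one is determined by `t = #β`, which ranges over `[⌈(n-2δ)/4⌉, ⌊(n-2δ)/3⌋]`; the
pairs in `level 2 δ (n+1)` without a part `2` in `α` are determined by `t' = #β`, which ranges over
`[⌈(n+1-δ)/3⌉, ⌊(n+1-δ)/2⌋]`, and `t' = ⌈(n+1-δ)/3⌉ + ⌊(n-2δ)/3⌋ - t` embeds the first range
into the second. -/
def raise (δ n : ℕ) (p : Mult 2) : Mult 2 :=
  if p.1 0 = 0 then
    let t := (n + 3 - δ) / 3 + (n - 2 * δ) / 3 - (p.2 0 + p.2 1)
    (![δ + t, 0], ![3 * t - (n + 1 - δ), n + 1 - δ - 2 * t])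
  else (![p.1 0 - 1, p.1 1 + 1], ![p.2 0, p.2 1])

lemma raise_mem {δ n : ℕ} (hδn : δ ≠ 0 ∨ n ≠ 0) {p : Mult 2} (hp : p ∈ level 2 δ n) :
    raise δ n p ∈ level 2 δ (n + 1) := by
  rw [mem_level_two] at hp ⊢
  unfold raise
  split_ifs <;> simp only [Matrix.cons_val_zero, Matrix.cons_val_one, Matrix.cons_val_fin_one] <;>
    omega

lemma raise_injOn (δ n : ℕ) : Set.InjOn (raise δ n) (level 2 δ n) := by
  intro p hp q hq hpq
  rw [mem_coe, mem_level_two] at hp hq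
  have e₁ := congrFun (congrArg Prod.fst hpq) 0
  have e₂ := congrFun (congrArg Prod.fst hpq) 1
  have e₃ := congrFun (congrArg Prod.snd hpq) 0
  have e₄ := congrFun (congrArg Prod.snd hpq) 1
  unfold raise at e₁ e₂ e₃ e₄
  split_ifs at e₁ e₂ e₃ e₄ <;>
    simp only [Matrix.cons_val_zero, Matrix.cons_val_one, Matrix.cons_val_fin_one]
      at e₁ e₂ e₃ e₄ <;>
    first | omega | exact mult_two_ext (by omega) (by omega) (by omega) (by omega)

lemma akm_two_le_succ {δ n : ℕ} (hδn : δ ≠ 0 ∨ n ≠ 0) : akm 2 δ n ≤ akm 2 δ (n + 1) := by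
  rw [← card_level, ← card_level]
  exact card_le_card_of_injOn _ (fun p hp => raise_mem hδn hp) (raise_injOn δ n)

theorem akm_two_monotone : MonotoneAwayFromOrigin (akm 2) := by
  intro d n hdn
  obtain ⟨δ, rfl | rfl⟩ := Int.eq_nat_or_neg d
  · exact akm_two_le_succ (by omega)
  · rw [akm_neg, akm_neg]
    exact akm_two_le_succ (by omega)

lemma akm_eq_akm_two {k : ℕ} (hk : 2 ≤ k) {d : ℤ} {n : ℕ} (hn : n ≤ 2) :
    akm k d n = akm 2 d n := by
  induction k, hk using Nat.le_induction with
  | base => rfl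
  | succ k hk ih => rw [akm_succ_of_lt (by omega), ih]

theorem monotoneAwayFromOrigin_akm_and_lt {k : ℕ} (hk : 2 ≤ k) :
    MonotoneAwayFromOrigin (akm k) ∧ akm k 1 (k + 1) < akm k 1 (k + 2) := by
  induction k, hk using Nat.le_induction with
  | base => exact ⟨akm_two_monotone, by decide⟩
  | succ k hk ih =>
    obtain ⟨hmono, hgain⟩ := ih
    have h00 : akm k 0 0 ≤ akm k 0 1 + 1 := by
      rw [akm_eq_akm_two hk (by norm_num), akm_eq_akm_two hk (by norm_num)]; decide
    have h01 : akm k 0 1 < akm k 0 2 := by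
      rw [akm_eq_akm_two hk (by norm_num), akm_eq_akm_two hk (by norm_num)]; decide
    have hgain' (e : ℤ) (he : e = 1 ∨ e = -1) : akm k e (k + 1) < akm k e (k + 2) := by
      rcases he with rfl | rfl
      · exact hgain
      · rwa [akm_neg, akm_neg]
    refine ⟨fun d n hdn => ?_, ?_⟩
    · rw [akm_succ_eq_sum (N := n + 2) (by omega), akm_succ_eq_sum (N := n + 2) (by omega)]
      exact sum_shiftedCoeff_le_succ k.succ_pos hmono h00 hgain' hdn
    · rw [akm_succ_eq_sum (N := k + 4) (by omega), akm_succ_eq_sum (N := k + 4) (by omega)]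
      exact sum_shiftedCoeff_lt_succ (by omega) hmono h01 (by omega)

end PartitionPair

open PartitionPair in
/-- For `k ≥ 2`: the constant coefficient of `f_{0,k}(q)` is `1`, the coefficient of
`q` is at least `-1`, the coefficient of `q^2` is at least `1`, and all other
coefficients are nonnegative. -/
theorem f0k_coeffs (k : ℕ) (hk : 2 ≤ k) :
    fmk k 0 0 = 1 ∧ -1 ≤ fmk k 0 1 ∧ 1 ≤ fmk k 0 2 ∧ ∀ n, 3 ≤ n → 0 ≤ fmk k 0 n := by
  have h₀ : akm k 0 0 = 1 := (akm_eq_akm_two hk (by norm_num)).trans (by decide)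
  have h₁ : akm k 0 1 = 0 := (akm_eq_akm_two hk (by norm_num)).trans (by decide)
  have h₂ : akm k 0 2 = 1 := (akm_eq_akm_two hk (by norm_num)).trans (by decide)
  refine ⟨by simp [fmk, h₀], by simp [fmk, h₀, h₁], by simp [fmk, h₁, h₂], fun n hn => ?_⟩
  obtain ⟨n, rfl⟩ : ∃ m, n = m + 1 := ⟨n - 1, by omega⟩
  have := (monotoneAwayFromOrigin_akm_and_lt hk).1 0 n (by omega)
  simp only [fmk, n.succ_ne_zero, if_false, Nat.add_sub_cancel, sub_nonneg]
  exact_mod_cast this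
end

section
/- Let N̄(m,n) denote the number of overpartitions of n whose D-rank (largest part minus number of parts) equals m. Then N̄(m,n) = N̄(−m,n) for all integers m and all n ≥ 0. -/
namespace OverNAux

open Multiset

/-- Number of parts of `s` that are greater than `i`. -/
def fpar (s : Multiset ℕ) (i : ℕ) : ℕ := s.countP (i < ·)

/-- The conjugate multiset of parts. -/
def conjParts (s : Multiset ℕ) : Multiset ℕ := (Multiset.range s.sup).map (fpar s)

lemma fpar_anti (s : Multiset ℕ) {i j : ℕ} (h : i ≤ j) : fpar s j ≤ fpar s i := by
  induction s using Multiset.induction with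
  | empty => simp [fpar]
  | cons a s ih =>
    simp only [fpar, countP_cons] at *
    gcongr
    split <;> split <;> omega

lemma lt_sup_iff {s : Multiset ℕ} {i : ℕ} : i < s.sup ↔ ∃ x ∈ s, i < x := by
  induction s using Multiset.induction with
  | empty => simp [Multiset.sup_zero]
  | cons a s ih => simp [Multiset.sup_cons, _root_.lt_sup_iff, ih]

lemma fpar_pos_iff {s : Multiset ℕ} {i : ℕ} : 0 < fpar s i ↔ i < s.sup := by
  rw [fpar, countP_pos, lt_sup_iff]

lemma nat_eq_of_lt_iff {a b : ℕ} (h : ∀ i, i < a ↔ i < b) : a = b := by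
  rcases lt_trichotomy a b with h' | h' | h'
  · exact absurd ((h a).mpr h') (lt_irrefl a)
  · exact h'
  · exact absurd ((h b).mp h') (lt_irrefl b)

lemma downclosed_card {T : Finset ℕ} (h : ∀ a b : ℕ, a ≤ b → b ∈ T → a ∈ T) (i : ℕ) :
    i < T.card ↔ i ∈ T := by
  constructor
  · intro hi
    by_contra hiT
    have : T ⊆ Finset.range i := by
      intro b hb
      simp only [Finset.mem_range]
      by_contra hbi
      exact hiT (h i b (by omega) hb)
    have := Finset.card_le_card this
    simp only [Finset.card_range] at this
    omega
  · intro hi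
    have : Finset.range (i + 1) ⊆ T := by
      intro a ha
      simp only [Finset.mem_range] at ha
      exact h a i (by omega) hi
    have := Finset.card_le_card this
    simp only [Finset.card_range] at this
    omega

lemma fpar_conjParts (s : Multiset ℕ) (j : ℕ) :
    fpar (conjParts s) j = ((Finset.range s.sup).filter (fun i => j < fpar s i)).card := by
  rw [fpar, conjParts, countP_map]
  rfl

/-- The Galois property. -/
lemma galois (s : Multiset ℕ) (i j : ℕ) : i < fpar (conjParts s) j ↔ j < fpar s i := by
  rw [fpar_conjParts]
  rw [downclosed_card]
  · constructor
    · intro h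
      exact (Finset.mem_filter.mp h).2
    · intro h
      refine Finset.mem_filter.mpr ⟨?_, h⟩
      rw [Finset.mem_range, ← fpar_pos_iff]
      omega
  · intro a b hab hb
    simp only [Finset.mem_filter, Finset.mem_range] at *
    refine ⟨?_, lt_of_lt_of_le hb.2 (fpar_anti s hab)⟩
    rw [← fpar_pos_iff] at hb ⊢
    have := fpar_anti s hab
    omega

lemma fpar_conj_conj (s : Multiset ℕ) (i : ℕ) :
    fpar (conjParts (conjParts s)) i = fpar s i :=
  nat_eq_of_lt_iff fun j => by rw [galois, galois]

lemma fpar_sub_one (s : Multiset ℕ) {k : ℕ} (hk : 0 < k) :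
    fpar s (k - 1) = s.count k + fpar s k := by
  have := Multiset.filter_add_filter (fun x => x = k) (fun x => k < x) s
  have h1 : Multiset.filter (fun x => x = k ∨ k < x) s = Multiset.filter (k - 1 < ·) s := by
    apply Multiset.filter_congr
    intro x _
    constructor
    · rintro (rfl | h) <;> omega
    · intro h; omega
  have h2 : Multiset.filter (fun x => x = k ∧ k < x) s = 0 := by
    rw [Multiset.filter_eq_nil]
    rintro x _ ⟨rfl, h⟩
    omega
  rw [h1, h2] at this
  have hc : s.count k = Multiset.card (Multiset.filter (fun x => x = k) s) := by
    rw [Multiset.count, Multiset.countP_eq_card_filter]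
    congr 1
    apply Multiset.filter_congr
    intro x _
    exact eq_comm
  have := congrArg Multiset.card this
  simp only [Multiset.card_add, Multiset.card_zero, add_zero] at this
  rw [fpar, fpar, Multiset.countP_eq_card_filter, Multiset.countP_eq_card_filter, hc]
  omega

lemma eq_of_fpar_eq {s t : Multiset ℕ} (hs : ∀ x ∈ s, 0 < x) (ht : ∀ x ∈ t, 0 < x)
    (h : ∀ i, fpar s i = fpar t i) : s = t := by
  ext k
  rcases Nat.eq_zero_or_pos k with rfl | hk
  · rw [Multiset.count_eq_zero_of_notMem, Multiset.count_eq_zero_of_notMem]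
    · intro h0; exact absurd (ht 0 h0) (lt_irrefl 0)
    · intro h0; exact absurd (hs 0 h0) (lt_irrefl 0)
  · have h1 := fpar_sub_one s hk
    have h2 := fpar_sub_one t hk
    rw [h (k-1), h k] at h1
    omega

lemma pos_of_mem_conjParts {s : Multiset ℕ} {y : ℕ} (hy : y ∈ conjParts s) : 0 < y := by
  rw [conjParts, Multiset.mem_map] at hy
  obtain ⟨i, hi, rfl⟩ := hy
  rw [Multiset.mem_range] at hi
  rw [fpar_pos_iff]
  exact hi

lemma conjParts_conjParts {s : Multiset ℕ} (hs : ∀ x ∈ s, 0 < x) :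
    conjParts (conjParts s) = s :=
  eq_of_fpar_eq (fun _ h => pos_of_mem_conjParts h) hs (fpar_conj_conj s)

lemma card_conjParts (s : Multiset ℕ) : Multiset.card (conjParts s) = s.sup := by
  rw [conjParts, Multiset.card_map, Multiset.card_range]

lemma fpar_zero {s : Multiset ℕ} (hs : ∀ x ∈ s, 0 < x) : fpar s 0 = Multiset.card s := by
  rw [fpar, Multiset.countP_eq_card]
  exact hs

lemma sup_conjParts {s : Multiset ℕ} (hs : ∀ x ∈ s, 0 < x) :
    (conjParts s).sup = Multiset.card s := by
  rw [← fpar_zero hs]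
  apply nat_eq_of_lt_iff
  intro i
  rw [lt_sup_iff]
  constructor
  · rintro ⟨x, hx, hix⟩
    rw [conjParts, Multiset.mem_map] at hx
    obtain ⟨i', _, rfl⟩ := hx
    exact lt_of_lt_of_le hix (fpar_anti s (Nat.zero_le i'))
  · intro h
    refine ⟨fpar s 0, ?_, h⟩
    rw [conjParts, Multiset.mem_map]
    refine ⟨0, ?_, rfl⟩
    rw [Multiset.mem_range, ← fpar_pos_iff]
    omega

lemma sum_aux (N : ℕ) (s : Multiset ℕ) (h : ∀ x ∈ s, x ≤ N) :
    ∑ i ∈ Finset.range N, fpar s i = s.sum := by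
  induction s using Multiset.induction with
  | empty => simp [fpar]
  | cons a s ih =>
    have ha : a ≤ N := h a (Multiset.mem_cons_self a s)
    have hs : ∀ x ∈ s, x ≤ N := fun x hx => h x (Multiset.mem_cons_of_mem hx)
    simp only [fpar, Multiset.countP_cons] at *
    rw [Finset.sum_add_distrib, ih hs, Multiset.sum_cons]
    have : ∑ i ∈ Finset.range N, (if i < a then 1 else 0) = a := by
      rw [← Finset.card_filter]
      have : (Finset.range N).filter (· < a) = Finset.range a := by
        ext x
        simp only [Finset.mem_filter, Finset.mem_range]
        omega
      rw [this, Finset.card_range]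
    omega

lemma sum_conjParts {s : Multiset ℕ} : (conjParts s).sum = s.sum := by
  rw [conjParts, ← sum_aux s.sup s (fun x hx => Multiset.le_sup hx)]
  rfl

end OverNAux

namespace OverNAux

/-- Conjugate of a partition. -/
def pconj {n : ℕ} (p : n.Partition) : n.Partition where
  parts := conjParts p.parts
  parts_pos := fun h => pos_of_mem_conjParts h
  parts_sum := by rw [sum_conjParts, p.parts_sum]

/-- Map on overlined part sizes corresponding to conjugation. -/
def phi (s : Multiset ℕ) (k : ℕ) : ℕ := fpar s (k - 1)

lemma phi_mem {s : Multiset ℕ} (hs : ∀ x ∈ s, 0 < x) {k : ℕ} (hk : k ∈ s) :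
    phi s k ∈ conjParts s := by
  rw [conjParts, Multiset.mem_map]
  refine ⟨k - 1, ?_, rfl⟩
  rw [Multiset.mem_range]
  have h1 := hs k hk
  have h2 := Multiset.le_sup hk
  omega

lemma phi_phi {s : Multiset ℕ} (hs : ∀ x ∈ s, 0 < x) {k : ℕ} (hk : k ∈ s) :
    phi (conjParts s) (phi s k) = k := by
  have hkpos := hs k hk
  have hcount : 0 < s.count k := Multiset.count_pos.mpr hk
  have hsub := fpar_sub_one s hkpos
  set m := fpar s (k - 1) with hm
  have hm1 : 0 < m := by omega
  show fpar (conjParts s) (m - 1) = k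
  apply nat_eq_of_lt_iff
  intro i
  rw [galois]
  constructor
  · intro h
    by_contra hik
    push_neg at hik
    have := fpar_anti s hik
    omega
  · intro h
    have : i ≤ k - 1 := by omega
    have := fpar_anti s this
    omega

/-- The overpartition-level involution. -/
def F {n : ℕ} (p : n.Partition × Finset ℕ) : n.Partition × Finset ℕ :=
  (pconj p.1, p.2.image (phi p.1.parts))

def Aset (m : ℤ) (n : ℕ) : Set (n.Partition × Finset ℕ) :=
  {p : n.Partition × Finset ℕ |
    p.2 ⊆ p.1.parts.toFinset ∧ (p.1.parts.sup : ℤ) - Multiset.card p.1.parts = m}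

lemma F_mapsTo {m : ℤ} {n : ℕ} {p : n.Partition × Finset ℕ} (hp : p ∈ Aset m n) :
    F p ∈ Aset (-m) n := by
  obtain ⟨hsub, hrank⟩ := hp
  have hpos : ∀ x ∈ p.1.parts, 0 < x := fun x hx => p.1.parts_pos hx
  constructor
  · intro y hy
    simp only [F, Finset.mem_image] at hy
    obtain ⟨k, hk, rfl⟩ := hy
    have hks : k ∈ p.1.parts := Multiset.mem_toFinset.mp (hsub hk)
    exact Multiset.mem_toFinset.mpr (phi_mem hpos hks)
  · show ((conjParts p.1.parts).sup : ℤ) - Multiset.card (conjParts p.1.parts) = -m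
    rw [sup_conjParts hpos, card_conjParts]
    omega

lemma F_invol {m : ℤ} {n : ℕ} {p : n.Partition × Finset ℕ} (hp : p ∈ Aset m n) :
    F (F p) = p := by
  obtain ⟨hsub, _⟩ := hp
  have hpos : ∀ x ∈ p.1.parts, 0 < x := fun x hx => p.1.parts_pos hx
  have h1 : pconj (pconj p.1) = p.1 := by
    apply Nat.Partition.ext
    exact conjParts_conjParts hpos
  refine Prod.ext h1 ?_
  show (p.2.image (phi p.1.parts)).image (phi (conjParts p.1.parts)) = p.2
  rw [Finset.image_image]
  have : p.2.image (phi (conjParts p.1.parts) ∘ phi p.1.parts) = p.2.image id := by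
    apply Finset.image_congr
    intro k hk
    simp only [Function.comp_apply, id_eq]
    exact phi_phi hpos (Multiset.mem_toFinset.mp (hsub hk))
  rw [this, Finset.image_id]

end OverNAux

/-- An overpartition of `n` is a partition of `n` together with a set of part sizes
whose first occurrence is overlined; we model it as a pair `(λ, S)` with
`λ : Nat.Partition n` and `S` a subset of the set of part sizes of `λ`.
`overN m n` is the number of overpartitions of `n` whose D-rank
(largest part minus number of parts) equals `m`. -/
noncomputable def overN (m : ℤ) (n : ℕ) : ℕ :=
  Set.ncard {p : n.Partition × Finset ℕ |
    p.2 ⊆ p.1.parts.toFinset ∧ (p.1.parts.sup : ℤ) - Multiset.card p.1.parts = m}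

theorem overN_symm (m : ℤ) (n : ℕ) : overN m n = overN (-m) n := by
  have key : ∀ m : ℤ, OverNAux.F '' OverNAux.Aset m n = OverNAux.Aset (-m) n := by
    intro m
    apply Set.Subset.antisymm
    · rintro _ ⟨p, hp, rfl⟩
      exact OverNAux.F_mapsTo hp
    · intro b hb
      have hFb := OverNAux.F_mapsTo hb
      rw [neg_neg] at hFb
      exact ⟨OverNAux.F b, hFb, OverNAux.F_invol hb⟩
  have hinj : Set.InjOn OverNAux.F (OverNAux.Aset m n) := by
    intro a ha b hb hab
    rw [← OverNAux.F_invol ha, ← OverNAux.F_invol hb, hab]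
  have : overN m n = (OverNAux.Aset m n).ncard := rfl
  rw [this]
  have : overN (-m) n = (OverNAux.Aset (-m) n).ncard := rfl
  rw [this, ← key m, Set.ncard_image_of_injOn hinj]
end
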